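/- Let K be a simplicial complex on the vertex set [m]. For an ordered partition U = (U_1 | ⋯ | U_p) of [m], set σ(U) = {i : 1 ≤ i ≤ m−1, {i, i+1} ⊆ U_j for some j} and τ(U) = {i : 1 ≤ i ≤ m−1, i+1 ∈ U_j and i ∈ U_k for some j < k}, and let Q(U) = {x ∈ [−1,1]^{m−1} : x_i = 1 for i ∈ τ(U), and x_i = −1 for i ∉ σ(U) ∪ τ(U)} (the image of the face F(U_1 | ⋯ | U_p) under the projection ρ : Perm^{m−1} → I^{m−1}). Define L(K) = {J ⊆ {1, …, m−1} : for every maximal set of consecutive elements {j, j+1, …, j+k} contained in J, the set {j, j+1, …, j+k, j+k+1} is a simplex of K}. Then: (a) L(K) is closed under taking subsets; and (b) the union of Q(U) over all ordered partitions U of [m] all of whose parts lie in K equals the real moment-angle complex R_{L(K)} = ⋃_{J ∈ L(K)} {x ∈ [−1,1]^{m−1} : x_i ∈ {−1, 1} for all i ∉ J}. -/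

import Mathlib

/-- A simplicial complex on the vertex set `[m] = {1, …, m}` (here subsets of `ℕ`):
a collection of subsets of `[m]` closed under taking subsets that contains every
singleton `{i}`, `i ∈ [m]`. -/
def IsSC (m : ℕ) (K : Set (Finset ℕ)) : Prop :=
  (∀ σ ∈ K, σ ⊆ Finset.Icc 1 m) ∧ (∀ σ ∈ K, ∀ τ, τ ⊆ σ → τ ∈ K) ∧
  (∀ i ∈ Finset.Icc 1 m, ({i} : Finset ℕ) ∈ K)

/-- An ordered partition of `[m] = {1, …, m}`: a list of pairwise disjoint nonempty
subsets whose union is `[m]`. -/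
def IsOP (m : ℕ) (L : List (Finset ℕ)) : Prop :=
  (∀ U ∈ L, U.Nonempty) ∧ L.Pairwise Disjoint ∧ L.foldr (· ∪ ·) ∅ = Finset.Icc 1 m

/-- `σ(U) = {i : {i, i+1} ⊆ U_j for some j}`. -/
def sigmaU (L : List (Finset ℕ)) : Set ℕ :=
  {i | ∃ j : Fin L.length, i ∈ L.get j ∧ i + 1 ∈ L.get j}

/-- `τ(U) = {i : i+1 ∈ U_j and i ∈ U_k for some j < k}`. -/
def tauU (L : List (Finset ℕ)) : Set ℕ :=
  {i | ∃ j k : Fin L.length, j < k ∧ i + 1 ∈ L.get j ∧ i ∈ L.get k}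

/-- `Q(U) ⊆ [-1,1]^{m-1}`: the image of the face `F(U_1 | ⋯ | U_p)` under the
projection `ρ`. Coordinates are indexed by `Fin (m-1)`, with `i : Fin (m-1)`
corresponding to the index `i+1 ∈ {1, …, m-1}`. -/
def Qface (m : ℕ) (L : List (Finset ℕ)) : Set (Fin (m - 1) → ℝ) :=
  {x | (∀ i, x i ∈ Set.Icc (-1 : ℝ) 1) ∧
       (∀ i : Fin (m - 1), (i.val + 1) ∈ tauU L → x i = 1) ∧
       (∀ i : Fin (m - 1), (i.val + 1) ∉ sigmaU L ∪ tauU L → x i = -1)}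

/-- `L(K)`: the collection of `J ⊆ {1, …, m-1}` such that for every maximal run
`{j, j+1, …, j+k}` of consecutive elements contained in `J`, the set
`{j, j+1, …, j+k+1}` is a simplex of `K`. -/
def Lcomplex (m : ℕ) (K : Set (Finset ℕ)) : Set (Finset ℕ) :=
  {J | J ⊆ Finset.Icc 1 (m - 1) ∧
    ∀ j k : ℕ, (∀ d ≤ k, j + d ∈ J) → (j - 1) ∉ J → (j + k + 1) ∉ J →
      Finset.Icc j (j + k + 1) ∈ K}

/-- The real moment-angle complex `R_L ⊆ [-1,1]^{m-1}` of a collection `L` of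
subsets of `{1, …, m-1}`. -/
def Rcomplex (m : ℕ) (Lk : Set (Finset ℕ)) : Set (Fin (m - 1) → ℝ) :=
  ⋃ J ∈ Lk, {x | (∀ i, x i ∈ Set.Icc (-1 : ℝ) 1) ∧
    ∀ i : Fin (m - 1), (i.val + 1) ∉ J → (x i = -1 ∨ x i = 1)}


/-!
A run of consecutive indices in `σ(U)` lies in a single part of `U`, so `σ(U) ∈ L(K)` and
`Q(U) ⊆ R_{σ(U)}`. Conversely, let `x` lie in the cube of some `J ∈ L(K)`. Scan `[m]` from left
to right: `t + 1` joins the part of `t` when `x_t ≠ ±1` (so `t ∈ J`), and otherwise starts a new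
part, placed first if `x_t = 1` and last if `x_t = -1`. New parts only ever go to the two ends,
so `σ` and `τ` at earlier indices are unaffected and `x ∈ Q(U)`. Each part is an interval whose
interior lies in `J`; extending that run of `J` to a maximal one shows the part is a simplex.
-/

open Finset

section Lists

variable {L : List (Finset ℕ)} {i : ℕ}

lemma mem_foldr_union {t : ℕ} : t ∈ L.foldr (· ∪ ·) ∅ ↔ ∃ U ∈ L, t ∈ U := by
  induction L with
  | nil => simp
  | cons U L ih => simp [ih]

lemma eq_of_pairwise_disjoint_of_mem (hL : L.Pairwise Disjoint) {U V : Finset ℕ} (hU : U ∈ L)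
    (hV : V ∈ L) {t : ℕ} (htU : t ∈ U) (htV : t ∈ V) : U = V := by
  by_contra hne
  exact Finset.disjoint_left.mp (hL.forall hU hV hne) htU htV

lemma mem_sigmaU_iff : i ∈ sigmaU L ↔ ∃ U ∈ L, i ∈ U ∧ i + 1 ∈ U := by
  simp [sigmaU, List.mem_iff_get]

lemma mem_tauU_iff : i ∈ tauU L ↔ ¬ L.Pairwise (fun U V => i + 1 ∈ U → i ∉ V) := by
  simp [tauU, List.pairwise_iff_get]

lemma notMem_tauU_of_mem_sigmaU (hL : L.Pairwise Disjoint) (hi : i ∈ sigmaU L) :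
    i ∉ tauU L := by
  obtain ⟨U, hU, hiU, hiU'⟩ := mem_sigmaU_iff.mp hi
  rw [mem_tauU_iff, not_not]
  refine hL.imp_of_mem fun {V W} hV hW hVW hiV hiW => ?_
  obtain rfl := eq_of_pairwise_disjoint_of_mem hL hU hV hiU' hiV
  obtain rfl := eq_of_pairwise_disjoint_of_mem hL hU hW hiU hiW
  exact Finset.disjoint_left.mp hVW hiU hiU

lemma notMem_tauU_of_forall_notMem (h : ∀ U ∈ L, i + 1 ∉ U) : i ∉ tauU L := by
  rintro ⟨j, -, -, hj, -⟩
  exact h _ (List.get_mem _ _) hj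

variable {W : Finset ℕ}

lemma mem_sigmaU_cons (hW : i + 1 ∉ W) : i ∈ sigmaU (W :: L) ↔ i ∈ sigmaU L := by
  simp [mem_sigmaU_iff, hW]

lemma mem_tauU_cons (hW : i + 1 ∉ W) : i ∈ tauU (W :: L) ↔ i ∈ tauU L := by
  simp [mem_tauU_iff, hW]

lemma mem_sigmaU_append_singleton (hW : i ∉ W) : i ∈ sigmaU (L ++ [W]) ↔ i ∈ sigmaU L := by
  simp [mem_sigmaU_iff, hW]

lemma mem_tauU_append_singleton (hW : i ∉ W) : i ∈ tauU (L ++ [W]) ↔ i ∈ tauU L := by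
  simp [mem_tauU_iff, List.pairwise_append, hW]

variable {f : Finset ℕ → Finset ℕ}

lemma mem_sigmaU_map (hi : ∀ U, i ∈ f U ↔ i ∈ U) (hi' : ∀ U, i + 1 ∈ f U ↔ i + 1 ∈ U) :
    i ∈ sigmaU (L.map f) ↔ i ∈ sigmaU L := by
  simp [mem_sigmaU_iff, hi, hi']

lemma mem_tauU_map (hi : ∀ U, i ∈ f U ↔ i ∈ U) (hi' : ∀ U, i + 1 ∈ f U ↔ i + 1 ∈ U) :
    i ∈ tauU (L.map f) ↔ i ∈ tauU L := by
  simp [mem_tauU_iff, List.pairwise_map, hi, hi']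

end Lists

lemma exists_Icc_subset_of_forall_mem_sigmaU {L : List (Finset ℕ)} (hL : L.Pairwise Disjoint)
    {j : ℕ} : ∀ k, (∀ d ≤ k, j + d ∈ sigmaU L) → ∃ U ∈ L, Icc j (j + k + 1) ⊆ U
  | 0, h => by
    obtain ⟨U, hU, hj, hj'⟩ := mem_sigmaU_iff.mp (h 0 le_rfl)
    refine ⟨U, hU, fun t ht => ?_⟩
    obtain rfl | rfl : t = j ∨ t = j + 1 := by simp at ht; omega
    exacts [hj, hj']
  | k + 1, h => by
    obtain ⟨U, hU, hUrun⟩ := exists_Icc_subset_of_forall_mem_sigmaU hL k fun d hd => h d (by omega)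
    obtain ⟨V, hV, hk, hk'⟩ := mem_sigmaU_iff.mp (h (k + 1) le_rfl)
    obtain rfl := eq_of_pairwise_disjoint_of_mem hL hU hV (hUrun (by simp; omega)) hk
    refine ⟨U, hU, fun t ht => ?_⟩
    rcases eq_or_lt_of_le (mem_Icc.mp ht).2 with rfl | hlt
    · exact hk'
    · exact hUrun (mem_Icc.mpr ⟨(mem_Icc.mp ht).1, by omega⟩)

lemma Icc_mem_of_Ico_subset {m : ℕ} {K : Set (Finset ℕ)} {J : Finset ℕ} (hK : IsSC m K)
    (hJ : J ∈ Lcomplex m K) {a c : ℕ} (ha : 1 ≤ a) (hac : a ≤ c) (hc : c ≤ m)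
    (h : Ico a c ⊆ J) : Icc a c ∈ K := by
  obtain rfl | hac := eq_or_lt_of_le hac
  · rw [Icc_self]
    exact hK.2.2 a (mem_Icc.mpr ⟨ha, hc⟩)
  have hJm : ∀ t ∈ J, 1 ≤ t ∧ t ≤ m - 1 := fun t ht => mem_Icc.mp (hJ.1 ht)
  by_cases hl : a - 1 ∈ J
  · have hK' := Icc_mem_of_Ico_subset hK hJ (a := a - 1) (hJm _ hl).1 (by omega) hc
      fun t ht => if hta : t = a - 1 then hta ▸ hl else h (by simp at ht ⊢; omega)
    exact hK.2.1 _ hK' _ (Icc_subset_Icc (by omega) le_rfl)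
  by_cases hr : c ∈ J
  · have hc' : c + 1 ≤ m := by have := hJm c hr; omega
    have hK' := Icc_mem_of_Ico_subset hK hJ (c := c + 1) ha (by omega) hc'
      fun t ht => if htc : t = c then htc ▸ hr else h (by simp at ht ⊢; omega)
    exact hK.2.1 _ hK' _ (Icc_subset_Icc le_rfl (by omega))
  have hend : a + (c - 1 - a) + 1 = c := by omega
  have hrun := hJ.2 a (c - 1 - a) (fun d hd => h (by simp; omega)) hl (by rwa [hend])
  rwa [hend] at hrun
termination_by a + (m - c)

section OrderedPartitions

def extendPart (n : ℕ) (U : Finset ℕ) : Finset ℕ :=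
  if n ∈ U then insert (n + 1) U else U

lemma mem_extendPart_of_ne {n t : ℕ} {U : Finset ℕ} (h : t ≠ n + 1) :
    t ∈ extendPart n U ↔ t ∈ U := by
  unfold extendPart
  split_ifs <;> simp [h]

lemma subset_extendPart {n : ℕ} {U : Finset ℕ} : U ⊆ extendPart n U := by
  unfold extendPart
  split_ifs <;> simp

variable {n : ℕ} {L L' : List (Finset ℕ)}

lemma isOP_iff : IsOP n L ↔ (∀ U ∈ L, U.Nonempty) ∧ L.Pairwise Disjoint ∧
    ∀ t, (∃ U ∈ L, t ∈ U) ↔ 1 ≤ t ∧ t ≤ n := by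
  simp only [IsOP, Finset.ext_iff, mem_foldr_union, mem_Icc]

lemma IsOP.le_of_mem (h : IsOP n L) {U : Finset ℕ} (hU : U ∈ L) {t : ℕ} (ht : t ∈ U) :
    1 ≤ t ∧ t ≤ n :=
  ((isOP_iff.mp h).2.2 t).mp ⟨U, hU, ht⟩

lemma IsOP.perm (h : IsOP n L) (hp : L.Perm L') : IsOP n L' := by
  obtain ⟨hne, hdisj, hcover⟩ := isOP_iff.mp h
  refine isOP_iff.mpr ⟨fun U hU => hne U (hp.mem_iff.mpr hU), hp.pairwise hdisj fun h => h.symm,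
    fun t => ?_⟩
  simp only [← hcover, hp.mem_iff]

lemma IsOP.cons_singleton (h : IsOP n L) : IsOP (n + 1) ({n + 1} :: L) := by
  obtain ⟨hne, hdisj, hcover⟩ := isOP_iff.mp h
  refine isOP_iff.mpr ⟨?_, ?_, fun t => ?_⟩
  · simpa using hne
  · refine List.pairwise_cons.mpr ⟨fun U hU => ?_, hdisj⟩
    simpa using fun ht => by have := (h.le_of_mem hU ht).2; omega
  · simp only [List.mem_cons, exists_eq_or_imp, mem_singleton, hcover]
    omega

lemma IsOP.append_singleton (h : IsOP n L) : IsOP (n + 1) (L ++ [{n + 1}]) :=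
  h.cons_singleton.perm (List.perm_append_singleton _ _).symm

lemma IsOP.map_extendPart (h : IsOP n L) (hn : 1 ≤ n) : IsOP (n + 1) (L.map (extendPart n)) := by
  obtain ⟨hne, hdisj, hcover⟩ := isOP_iff.mp h
  refine isOP_iff.mpr ⟨?_, ?_, fun t => ?_⟩
  · simp only [List.mem_map, forall_exists_index, and_imp, forall_apply_eq_imp_iff₂]
    exact fun U hU => (hne U hU).mono subset_extendPart
  · refine List.pairwise_map.mpr (hdisj.imp_of_mem fun {U V} hU hV hUV => ?_)
    have hlt : ∀ W ∈ L, n + 1 ∉ W := fun W hW hW' => by have := (h.le_of_mem hW hW').2; omega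
    unfold extendPart
    split_ifs with hnU hnV hnV
    · exact absurd hnV (Finset.disjoint_left.mp hUV hnU)
    · exact disjoint_insert_left.mpr ⟨hlt V hV, hUV⟩
    · exact disjoint_insert_right.mpr ⟨hlt U hU, hUV⟩
    · exact hUV
  · obtain ⟨U₀, hU₀, hnU₀⟩ := (hcover n).mpr ⟨hn, le_rfl⟩
    constructor
    · simp only [List.mem_map]
      rintro ⟨_, ⟨U, hU, rfl⟩, ht⟩
      unfold extendPart at ht
      split_ifs at ht
      · rcases mem_insert.mp ht with rfl | ht
        · omega
        · have := h.le_of_mem hU ht; omega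
      · have := h.le_of_mem hU ht; omega
    · intro ht
      rcases eq_or_lt_of_le ht.2 with rfl | hlt
      · exact ⟨_, List.mem_map_of_mem hU₀, by simp [extendPart, hnU₀]⟩
      · obtain ⟨U, hU, htU⟩ := (hcover t).mpr ⟨ht.1, by omega⟩
        exact ⟨_, List.mem_map_of_mem hU, subset_extendPart htU⟩

end OrderedPartitions

section Zigzag

noncomputable def zigzag (y : ℕ → ℝ) : ℕ → List (Finset ℕ)
  | 0 => []
  | 1 => [{1}]
  | n + 2 =>
    if y (n + 1) = 1 then {n + 2} :: zigzag y (n + 1)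
    else if y (n + 1) = -1 then zigzag y (n + 1) ++ [{n + 2}]
    else (zigzag y (n + 1)).map (extendPart (n + 1))

variable (y : ℕ → ℝ)

lemma isOP_zigzag : ∀ n, IsOP n (zigzag y n)
  | 0 => by simp [IsOP, zigzag]
  | 1 => by simp [IsOP, zigzag]
  | n + 2 => by
    have ih := isOP_zigzag (n + 1)
    rw [zigzag]
    split_ifs
    exacts [ih.cons_singleton, ih.append_singleton, ih.map_extendPart (by omega)]

lemma zigzag_part : ∀ n, ∀ U ∈ zigzag y n,
    ∃ a c, U = Icc a c ∧ ∀ s ∈ Ico a c, y s ≠ 1 ∧ y s ≠ -1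
  | 0 => by simp [zigzag]
  | 1 => by
    simp only [zigzag, List.mem_singleton, forall_eq]
    exact ⟨1, 1, (Icc_self 1).symm, by simp⟩
  | n + 2 => by
    have ih := zigzag_part (n + 1)
    have hsingleton : ∃ a c, {n + 2} = Icc a c ∧ ∀ s ∈ Ico a c, y s ≠ 1 ∧ y s ≠ -1 :=
      ⟨n + 2, n + 2, Icc_self _ |>.symm, by simp⟩
    rw [zigzag]
    split_ifs with h1 h2
    · exact List.forall_mem_cons.mpr ⟨hsingleton, ih⟩
    · exact fun U hU => (List.mem_append.mp hU).elim (ih U) fun hU => by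
        rw [List.mem_singleton.mp hU]; exact hsingleton
    simp only [List.mem_map, forall_exists_index, and_imp, forall_apply_eq_imp_iff₂]
    intro U hU
    obtain ⟨a, c, rfl, hac⟩ := ih U hU
    by_cases hn : n + 1 ∈ Icc a c
    · obtain ⟨han, hnc⟩ := mem_Icc.mp hn
      have := (isOP_zigzag y (n + 1)).le_of_mem hU (right_mem_Icc.mpr (han.trans hnc))
      obtain rfl : c = n + 1 := by omega
      refine ⟨a, n + 2, ?_, fun s hs => ?_⟩
      · rw [extendPart, if_pos hn]
        exact insert_Icc_right_eq_Icc_add_one (by omega)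
      · rcases eq_or_ne s (n + 1) with rfl | hs'
        · exact ⟨h1, h2⟩
        · exact hac s (by simp at hs ⊢; omega)
    · exact ⟨a, c, by rw [extendPart, if_neg hn], hac⟩

lemma zigzag_sign : ∀ n, ∀ t, 1 ≤ t → t < n →
    (t ∈ tauU (zigzag y n) → y t = 1) ∧
      (t ∉ sigmaU (zigzag y n) ∪ tauU (zigzag y n) → y t = -1)
  | 0 | 1 => by omega
  | n + 2 => by
    intro t ht1 ht
    have hL := isOP_zigzag y (n + 1)
    rcases Nat.lt_succ_iff_lt_or_eq.mp ht with ht | rfl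
    · have ih := zigzag_sign (n + 1) t ht1 ht
      have hne : t ≠ n + 2 := by omega
      have hne' : t + 1 ≠ n + 2 := by omega
      rw [zigzag]
      simp only [Set.mem_union] at ih ⊢
      split_ifs
      · rwa [mem_sigmaU_cons (by simpa using hne'), mem_tauU_cons (by simpa using hne')]
      · rwa [mem_sigmaU_append_singleton (by simpa using hne),
          mem_tauU_append_singleton (by simpa using hne)]
      · have h := fun U => mem_extendPart_of_ne (U := U) hne
        have h' := fun U => mem_extendPart_of_ne (U := U) hne'
        rwa [mem_sigmaU_map h h', mem_tauU_map h h']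
    obtain ⟨U, hU, hnU⟩ := ((isOP_iff.mp hL).2.2 (n + 1)).mpr ⟨ht1, le_rfl⟩
    rw [zigzag]
    split_ifs with h1 h2
    · have hτ : n + 1 ∈ tauU ({n + 2} :: zigzag y (n + 1)) := mem_tauU_iff.mpr fun hp =>
        (List.pairwise_cons.mp hp).1 U hU (mem_singleton_self _) hnU
      exact ⟨fun _ => h1, fun h => absurd (Or.inr hτ) h⟩
    · have hτ : n + 1 ∉ tauU (zigzag y (n + 1)) := notMem_tauU_of_forall_notMem fun V hV h =>
        by have := (hL.le_of_mem hV h).2; omega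
      rw [mem_tauU_append_singleton (by simp)]
      exact ⟨fun h => absurd h hτ, fun _ => h2⟩
    · have hσ : n + 1 ∈ sigmaU ((zigzag y (n + 1)).map (extendPart (n + 1))) :=
        mem_sigmaU_iff.mpr ⟨_, List.mem_map_of_mem hU, subset_extendPart hnU,
          by simp [extendPart, hnU]⟩
      exact ⟨fun h => absurd h (notMem_tauU_of_mem_sigmaU (hL.map_extendPart ht1).2.1 hσ),
        fun h => absurd (Or.inl hσ) h⟩

end Zigzag

section Complexes

variable {m : ℕ} {K : Set (Finset ℕ)}

lemma Lcomplex_of_subset (hK : IsSC m K) {J J' : Finset ℕ} (hJ : J ∈ Lcomplex m K)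
    (hJ' : J' ⊆ J) : J' ∈ Lcomplex m K := by
  refine ⟨hJ'.trans hJ.1, fun j k hrun _ _ => ?_⟩
  have hj := mem_Icc.mp (hJ.1 (hJ' (by simpa using hrun 0 (Nat.zero_le k))))
  have hjk := mem_Icc.mp (hJ.1 (hJ' (hrun k le_rfl)))
  refine Icc_mem_of_Ico_subset hK hJ hj.1 (by omega) (by omega) fun t ht => hJ' ?_
  have ht := mem_Ico.mp ht
  simpa [show j + (t - j) = t by omega] using hrun (t - j) (by omega)

lemma Qface_subset_Rcomplex (hK : IsSC m K) {L : List (Finset ℕ)} (hL : IsOP m L)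
    (hLK : ∀ U ∈ L, U ∈ K) : Qface m L ⊆ Rcomplex m (Lcomplex m K) := by
  rintro x ⟨hbd, hτ, hστ⟩
  classical
  set J := (Icc 1 (m - 1)).filter (· ∈ sigmaU L)
  have hJ : J ∈ Lcomplex m K := by
    refine ⟨filter_subset _ _, fun j k hrun _ _ => ?_⟩
    obtain ⟨U, hU, hjU⟩ := exists_Icc_subset_of_forall_mem_sigmaU hL.2.1 k
      fun d hd => (mem_filter.mp (hrun d hd)).2
    exact hK.2.1 U (hLK U hU) _ hjU
  refine Set.mem_iUnion₂.mpr ⟨J, hJ, hbd, fun i hi => ?_⟩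
  have hσ : i.val + 1 ∉ sigmaU L := fun h =>
    hi (mem_filter.mpr ⟨mem_Icc.mpr ⟨by omega, by omega⟩, h⟩)
  by_cases hτi : i.val + 1 ∈ tauU L
  · exact Or.inr (hτ i hτi)
  · exact Or.inl (hστ i fun h => h.elim hσ hτi)

lemma exists_isOP_mem_Qface (hK : IsSC m K) {J : Finset ℕ} (hJ : J ∈ Lcomplex m K)
    {x : Fin (m - 1) → ℝ} (hbd : ∀ i, x i ∈ Set.Icc (-1 : ℝ) 1)
    (hpm : ∀ i : Fin (m - 1), i.val + 1 ∉ J → x i = -1 ∨ x i = 1) :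
    ∃ L, IsOP m L ∧ (∀ U ∈ L, U ∈ K) ∧ x ∈ Qface m L := by
  set y : ℕ → ℝ := fun t => if h : t - 1 < m - 1 then x ⟨t - 1, h⟩ else 0
  have hy : ∀ i : Fin (m - 1), y (i.val + 1) = x i := fun i => by simp [y]
  have hL := isOP_zigzag y m
  refine ⟨zigzag y m, hL, fun U hU => ?_, hbd, fun i hi => ?_, fun i hi => ?_⟩
  · obtain ⟨a, c, rfl, hcut⟩ := zigzag_part y m U hU
    have hac := nonempty_Icc.mp ((isOP_iff.mp hL).1 _ hU)
    have ha := hL.le_of_mem hU (left_mem_Icc.mpr hac)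
    have hc := hL.le_of_mem hU (right_mem_Icc.mpr hac)
    refine Icc_mem_of_Ico_subset hK hJ ha.1 hac hc.2 fun s hs => ?_
    have hs' := mem_Ico.mp hs
    by_contra hsJ
    have hxs := hpm ⟨s - 1, by omega⟩ (by simpa [show s - 1 + 1 = s by omega] using hsJ)
    have hys := hy ⟨s - 1, by omega⟩
    simp only [show s - 1 + 1 = s by omega] at hys
    rw [← hys] at hxs
    exact hxs.elim (hcut s hs).2 (hcut s hs).1
  · rw [← hy]
    exact (zigzag_sign y m (i.val + 1) (by omega) (by omega)).1 hi
  · rw [← hy]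
    exact (zigzag_sign y m (i.val + 1) (by omega) (by omega)).2 hi

end Complexes

theorem stmt16_general (m : ℕ) (K : Set (Finset ℕ)) (hK : IsSC m K) :
    -- (a) `L(K)` is closed under taking subsets:
    (∀ J ∈ Lcomplex m K, ∀ J' ⊆ J, J' ∈ Lcomplex m K) ∧
    -- (b) the union of the faces `Q(U)` over admissible ordered partitions is the
    -- real moment-angle complex of `L(K)`:
    (⋃ L ∈ {L : List (Finset ℕ) | IsOP m L ∧ ∀ U ∈ L, U ∈ K}, Qface m L) =
      Rcomplex m (Lcomplex m K) := by
  refine ⟨fun J hJ J' hJ' => Lcomplex_of_subset hK hJ hJ', ?_⟩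
  apply Set.Subset.antisymm
  · exact Set.iUnion₂_subset fun L ⟨hL, hLK⟩ => Qface_subset_Rcomplex hK hL hLK
  · refine Set.iUnion₂_subset fun J hJ x ⟨hbd, hpm⟩ => ?_
    obtain ⟨L, hL, hLK, hx⟩ := exists_isOP_mem_Qface hK hJ hbd hpm
    exact Set.mem_iUnion₂.mpr ⟨L, ⟨hL, hLK⟩, hx⟩

theorem stmt16 (m : ℕ) (hm : 1 ≤ m) (K : Set (Finset ℕ)) (hK : IsSC m K) :
    -- (a) `L(K)` is closed under taking subsets:
    (∀ J ∈ Lcomplex m K, ∀ J' ⊆ J, J' ∈ Lcomplex m K) ∧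
    -- (b) the union of the faces `Q(U)` over admissible ordered partitions is the
    -- real moment-angle complex of `L(K)`:
    (⋃ L ∈ {L : List (Finset ℕ) | IsOP m L ∧ ∀ U ∈ L, U ∈ K}, Qface m L) =
      Rcomplex m (Lcomplex m K) :=
  stmt16_general m K hK
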